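/- Let H be an infinite dimensional separable complex Hilbert space and let K(H) be the C*-algebra of compact operators on H, with ξ ⊗ ξ denoting the rank-one operator ν ↦ (ν,ξ)ξ. Then there is no continuous linear mapping Φ : K(H) → ℂ such that Φ(ξ ⊗ ξ) = ‖ξ‖² for all ξ ∈ H. Consequently, for the Hilbert K(H)-module W = H ⊕ H with inner product ⟨(ξ₁,ξ₂),(η₁,η₂)⟩ = η₁ ⊗ ξ₁ + η₂ ⊗ ξ₂ and the continuous orthogonally additive mapping f((ξ₁,ξ₂)) = ‖ξ₁‖² + ‖ξ₂‖², there is no continuous linear Φ : K(H) → ℂ with f(w) = Φ(⟨w,w⟩) for all w ∈ W. -/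

import Mathlib

open Metric ContinuousLinearMap in
/-- **Schauder's theorem** for Hilbert space: the adjoint of a compact operator is compact. -/
theorem IsCompactOperator.star_clm {H : Type*} [NormedAddCommGroup H] [InnerProductSpace ℂ H]
    [CompleteSpace H] {f : H →L[ℂ] H} (hf : IsCompactOperator f) :
    IsCompactOperator ⇑(star f) := by
  have hA : IsCompactOperator ⇑(f ∘L (star f)) := by
    exact hf.comp_clm (star f)
  have goal_iff := isCompactOperator_iff_isCompact_closure_image_closedBall
    ((star f : H →L[ℂ] H) : H →ₗ[ℂ] H) zero_lt_one
  refine goal_iff.mpr (isCompact_iff_totallyBounded_isComplete.mpr ⟨?_, isClosed_closure.isComplete⟩)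
  refine TotallyBounded.closure ?_
  rw [Metric.totallyBounded_iff]
  intro ε hε
  set A := f ∘L (star f) with hAdef
  have hAtb : TotallyBounded (⇑A '' closedBall 0 1) := by
    have h1 := (isCompactOperator_iff_isCompact_closure_image_closedBall
      ((A : H →L[ℂ] H) : H →ₗ[ℂ] H) zero_lt_one).mp hA
    exact h1.totallyBounded.subset subset_closure
  obtain ⟨t, htsub, htfin, hcov⟩ := totallyBounded_iff_subset.mp hAtb
      {p : H × H | dist p.1 p.2 < ε ^ 2 / 8} (Metric.dist_mem_uniformity (by positivity))
  -- choose preimages of the centers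
  have hchoice : ∀ y ∈ t, ∃ u ∈ closedBall (0 : H) 1, A u = y := fun y hy => by
    obtain ⟨u, hu, hu'⟩ := htsub hy
    exact ⟨u, hu, hu'⟩
  classical
  choose u hu hAu using hchoice
  refine ⟨(fun y => if hy : y ∈ t then star f (u y hy) else 0) '' t, htfin.image _, ?_⟩
  rintro w ⟨x, hx, rfl⟩
  obtain ⟨y, hy, hdy⟩ : ∃ y ∈ t, dist (A x) y < ε ^ 2 / 8 := by
    have := hcov ⟨x, hx, rfl⟩
    simp only [Set.mem_iUnion, Set.mem_setOf_eq] at this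
    obtain ⟨y, hy, hd⟩ := this
    exact ⟨y, hy, hd⟩
  simp only [Set.mem_iUnion, mem_ball]
  refine ⟨star f (u y hy), ⟨y, hy, by simp [hy]⟩, ?_⟩
  -- estimate
  set z := x - u y hy with hz
  have hznorm : ‖z‖ ≤ 2 := by
    have h1 : ‖x‖ ≤ 1 := by simpa using hx
    have h2 : ‖u y hy‖ ≤ 1 := by simpa using hu y hy
    calc ‖z‖ ≤ ‖x‖ + ‖u y hy‖ := norm_sub_le _ _
    _ ≤ 2 := by linarith
  have hAz : ‖A z‖ < ε ^ 2 / 8 := by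
    have : A z = A x - y := by rw [hz, map_sub, hAu y hy]
    rw [this, ← dist_eq_norm]
    exact hdy
  have hkey : ‖star f z‖ ^ 2 ≤ ‖z‖ * ‖A z‖ := by
    have h1 : ‖star f z‖ ^ 2 = RCLike.re (inner ℂ (star f z) (star f z) : ℂ) := by
      rw [← @norm_sq_eq_re_inner ℂ]
    have h2 : (inner ℂ (star f z) (star f z) : ℂ) = inner ℂ z (A z) := by
      rw [star_eq_adjoint]
      rw [adjoint_inner_left]
      rfl
    have h3 : RCLike.re (inner ℂ z (A z) : ℂ) ≤ ‖(inner ℂ z (A z) : ℂ)‖ := RCLike.re_le_norm _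
    have h4 : ‖(inner ℂ z (A z) : ℂ)‖ ≤ ‖z‖ * ‖A z‖ := norm_inner_le_norm _ _
    rw [h1, h2]
    exact h3.trans h4
  have hfz : ‖star f z‖ ^ 2 < ε ^ 2 / 4 := by
    have hAz0 : 0 ≤ ‖A z‖ := norm_nonneg _
    nlinarith [hkey, hznorm, hAz, norm_nonneg z]
  have : dist (star f x) (star f (u y hy)) = ‖star f z‖ := by
    rw [dist_eq_norm, ← map_sub, hz]
  show dist ((star f) x) ((star f) (u y hy)) < ε
  rw [this]
  nlinarith [norm_nonneg ((star f) z), hfz, hε]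

noncomputable section

variable (H : Type*) [NormedAddCommGroup H] [InnerProductSpace ℂ H] [CompleteSpace H]

/-- The compact operators on the Hilbert space `H`, as a non-unital star subalgebra
of `H →L[ℂ] H`. -/
def compactStarAlgebra : NonUnitalStarSubalgebra ℂ (H →L[ℂ] H) where
  carrier := {T : H →L[ℂ] H | IsCompactOperator T}
  add_mem' hf hg := hf.add hg
  zero_mem' := isCompactOperator_zero
  smul_mem' c _ hf := hf.smul c
  mul_mem' {f g} hf _ := by simpa [Function.comp_def] using hf.comp_clm g
  star_mem' {f} hf := hf.star_clm

/-- `K(H)`, the C*-algebra of compact operators on the Hilbert space `H`. -/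
abbrev KH := ↥(compactStarAlgebra H)

instance : CStarRing (KH H) where
  norm_mul_self_le x := by simpa using CStarRing.norm_mul_self_le (x : H →L[ℂ] H)

instance : CompleteSpace (KH H) :=
  (isClosed_setOf_isCompactOperator (σ₁₂ := RingHom.id ℂ) (M₁ := H) (M₂ := H)).completeSpace_coe

variable {H}

/-- The rank one operator `ξ ⊗ η : ν ↦ (ν, η)ξ` (inner product linear in the first slot,
i.e. `(ν, η) = ⟪η, ν⟫` in Mathlib's convention). -/
def rankOneOp (ξ η : H) : H →L[ℂ] H := (innerSL ℂ η).smulRight ξ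

set_option linter.unusedSectionVars false in
theorem isCompactOperator_rankOneOp (ξ η : H) : IsCompactOperator ⇑(rankOneOp ξ η) := by
  refine (isCompactOperator_iff_image_closedBall_subset_compact
    ((rankOneOp ξ η : H →L[ℂ] H) : H →ₗ[ℂ] H) zero_lt_one).mpr ?_
  refine ⟨(fun c : ℂ => c • ξ) '' Metric.closedBall 0 ‖η‖,
    (isCompact_closedBall 0 ‖η‖).image (by fun_prop), ?_⟩
  rintro x ⟨ν, hν, rfl⟩
  refine ⟨inner ℂ η ν, ?_, rfl⟩
  simp only [Metric.mem_closedBall, dist_zero_right] at hν ⊢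
  calc ‖(inner ℂ η ν : ℂ)‖ ≤ ‖η‖ * ‖ν‖ := norm_inner_le_norm η ν
  _ ≤ ‖η‖ := by nlinarith [norm_nonneg (η : H)]

/-- The rank one operator `ξ ⊗ η` as an element of `K(H)`. -/
def KH.rankOne (ξ η : H) : KH H := ⟨rankOneOp ξ η, isCompactOperator_rankOneOp ξ η⟩

/-- A Hilbert C*-module structure on `W` over a C*-algebra `A`: a right `A`-action `smul`
and an `A`-valued inner product `inner` satisfying the usual axioms, whose induced norm
`‖⟨x,x⟩‖ ^ (1/2)` coincides with the (complete) norm of `W`.  Positivity `⟨x,x⟩ ≥ 0` is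
encoded through its C*-algebraic characterization `∃ b, ⟨x,x⟩ = b* ⬝ b`. -/
structure HilbertModule (A : Type*) (W : Type*)
    [NonUnitalNormedRing A] [StarRing A] [CStarRing A] [NormedSpace ℂ A]
    [IsScalarTower ℂ A A] [SMulCommClass ℂ A A] [StarModule ℂ A] [CompleteSpace A]
    [NormedAddCommGroup W] [NormedSpace ℂ W] [CompleteSpace W] : Type _ where
  smul : W → A → W
  inner : W → W → A
  add_smul' : ∀ x y a, smul (x + y) a = smul x a + smul y a
  smul_add' : ∀ x a b, smul x (a + b) = smul x a + smul x b
  smul_assoc' : ∀ x a b, smul (smul x a) b = smul x (a * b)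
  smul_complex₁ : ∀ (c : ℂ) x a, smul (c • x) a = c • smul x a
  smul_complex₂ : ∀ (c : ℂ) x a, smul x (c • a) = c • smul x a
  inner_add_left : ∀ x y z, inner (x + y) z = inner x z + inner y z
  inner_add_right : ∀ x y z, inner x (y + z) = inner x y + inner x z
  inner_smul_right : ∀ x y a, inner x (smul y a) = inner x y * a
  inner_smul_complex : ∀ (c : ℂ) x y, inner x (c • y) = c • inner x y
  star_inner : ∀ x y, star (inner x y) = inner y x
  inner_self_nonneg : ∀ x, ∃ a, inner x x = star a * a
  inner_self_eq_zero : ∀ x, inner x x = 0 ↔ x = 0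
  norm_sq_eq : ∀ x, ‖x‖ ^ 2 = ‖inner x x‖

/-- A minimal projection in an algebra `A`: a nonzero self-adjoint idempotent `e`
with `e ⬝ A ⬝ e = ℂ ⬝ e`. -/
def IsMinimalProjection {A : Type*} [NonUnitalNormedRing A] [StarRing A] [NormedSpace ℂ A]
    (e : A) : Prop :=
  star e = e ∧ e * e = e ∧ e ≠ 0 ∧ ∀ a : A, ∃ c : ℂ, e * a * e = c • e

/-- An orthonormal basis `{w i}` of a Hilbert C*-module: each `⟨wᵢ, wᵢ⟩` is a minimal
projection, `⟨wᵢ, wⱼ⟩ = 0` for `i ≠ j`, and the submodule generated by the `wᵢ`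
is dense in `W`. -/
def HilbertModule.IsOrthonormalBasis {A W : Type*}
    [NonUnitalNormedRing A] [StarRing A] [CStarRing A] [NormedSpace ℂ A]
    [IsScalarTower ℂ A A] [SMulCommClass ℂ A A] [StarModule ℂ A] [CompleteSpace A]
    [NormedAddCommGroup W] [NormedSpace ℂ W] [CompleteSpace W]
    (M : HilbertModule A W) {ι : Type*} (w : ι → W) : Prop :=
  (∀ i, IsMinimalProjection (M.inner (w i) (w i))) ∧
  (∀ i j, i ≠ j → M.inner (w i) (w j) = 0) ∧
  closure (↑(Submodule.span ℂ
      (Set.range w ∪ {x | ∃ (i : ι) (a : A), M.smul (w i) a = x})) : Set W) = Set.univ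

/-! The operators `∑_{n<N} eₙ ⊗ eₙ` built from an orthonormal sequence `(eₙ)` are orthogonal
projections, so they have norm at most `1`, while `Φ` would send them to `N`. Taking `ξ₂ = 0`
reduces the Hilbert-module statement to the first one. -/

theorem exists_orthonormal_nat_of_not_finiteDimensional {𝕜 E : Type*} [RCLike 𝕜]
    [NormedAddCommGroup E] [InnerProductSpace 𝕜 E] [CompleteSpace E]
    (hinf : ¬ FiniteDimensional 𝕜 E) : ∃ e : ℕ → E, Orthonormal 𝕜 e := by
  obtain ⟨w, b, -⟩ := exists_hilbertBasis 𝕜 E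
  have : Infinite w := by
    by_contra hfin
    have := not_infinite_iff_finite.mp hfin
    have := Fintype.ofFinite w
    exact hinf b.toOrthonormalBasis.toBasis.finiteDimensional_of_finite
  exact ⟨b ∘ Infinite.natEmbedding w, b.orthonormal.comp _ (Infinite.natEmbedding w).injective⟩

theorem Orthonormal.sum_rankOne_eq_starProjection {𝕜 E ι : Type*} [RCLike 𝕜]
    [NormedAddCommGroup E] [InnerProductSpace 𝕜 E] [DecidableEq E] {v : ι → E}
    (hv : Orthonormal 𝕜 v) (s : Finset ι) :
    ∑ i ∈ s, InnerProductSpace.rankOne 𝕜 (v i) (v i) =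
      (Submodule.span 𝕜 (s.image v : Set E)).starProjection := by
  rw [(OrthonormalBasis.span hv s).starProjection_eq_sum_rankOne]
  simp only [OrthonormalBasis.span_apply]
  exact (Finset.sum_coe_sort s fun i => InnerProductSpace.rankOne 𝕜 (v i) (v i)).symm

namespace KH

variable {H : Type*} [NormedAddCommGroup H] [InnerProductSpace ℂ H] [CompleteSpace H]

theorem rankOne_zero_left (η : H) : KH.rankOne (0 : H) η = 0 := by
  ext ν
  simp [KH.rankOne, rankOneOp]

theorem norm_sum_rankOne_self_le_one {ι : Type*} {v : ι → H} (hv : Orthonormal ℂ v)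
    (s : Finset ι) : ‖∑ i ∈ s, KH.rankOne (v i) (v i)‖ ≤ 1 := by
  classical
  have hcoe : ((∑ i ∈ s, KH.rankOne (v i) (v i) : KH H) : H →L[ℂ] H) =
      (Submodule.span ℂ (s.image v : Set H)).starProjection := by
    rw [← hv.sum_rankOne_eq_starProjection]
    push_cast
    rfl
  exact (congrArg norm hcoe).trans_le (Submodule.starProjection_norm_le _)

theorem not_exists_clm_apply_rankOne_self (hinf : ¬ FiniteDimensional ℂ H) :
    ¬ ∃ Φ : KH H →L[ℂ] ℂ, ∀ ξ : H, Φ (KH.rankOne ξ ξ) = (‖ξ‖ : ℂ) ^ 2 := by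
  rintro ⟨Φ, hΦ⟩
  obtain ⟨e, he⟩ := exists_orthonormal_nat_of_not_finiteDimensional hinf
  obtain ⟨N, hN⟩ := exists_nat_gt ‖Φ‖
  have hΦN : Φ (∑ n ∈ Finset.range N, KH.rankOne (e n) (e n)) = N := by
    simp [map_sum, hΦ, he.1]
  have := Φ.le_opNorm_of_le (norm_sum_rankOne_self_le_one he (Finset.range N))
  rw [hΦN, Complex.norm_natCast, mul_one] at this
  linarith

end KH

theorem no_continuous_linear_representation_on_compacts_general
    {H : Type*} [NormedAddCommGroup H] [InnerProductSpace ℂ H] [CompleteSpace H]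
    (hinf : ¬ FiniteDimensional ℂ H) :
    (¬ ∃ Φ : KH H →L[ℂ] ℂ, ∀ ξ : H, Φ (KH.rankOne ξ ξ) = (‖ξ‖ : ℂ) ^ 2) ∧
    (¬ ∃ Φ : KH H →L[ℂ] ℂ, ∀ p : H × H,
        (‖p.1‖ : ℂ) ^ 2 + (‖p.2‖ : ℂ) ^ 2
          = Φ (KH.rankOne p.1 p.1 + KH.rankOne p.2 p.2)) := by
  refine ⟨KH.not_exists_clm_apply_rankOne_self hinf, fun ⟨Φ, hΦ⟩ => ?_⟩
  refine KH.not_exists_clm_apply_rankOne_self hinf ⟨Φ, fun ξ => ?_⟩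
  simpa [KH.rankOne_zero_left] using (hΦ (ξ, 0)).symm

/-- Example 4.6, non-extendability.
Let `H` be an infinite dimensional separable Hilbert space.  There is no continuous
linear `Φ : K(H) → ℂ` with `Φ(ξ ⊗ ξ) = ‖ξ‖²` for all `ξ ∈ H`; consequently, for the
Hilbert `K(H)`-module `W = H ⊕ H` with `⟨(ξ₁,ξ₂),(η₁,η₂)⟩ = η₁ ⊗ ξ₁ + η₂ ⊗ ξ₂` and the
continuous orthogonally additive `f (ξ₁,ξ₂) = ‖ξ₁‖² + ‖ξ₂‖²`, there is no continuous
linear `Φ : K(H) → ℂ` with `f(w) = Φ(⟨w,w⟩)` for all `w ∈ W`. -/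
theorem no_continuous_linear_representation_on_compacts
    {H : Type*} [NormedAddCommGroup H] [InnerProductSpace ℂ H] [CompleteSpace H]
    [TopologicalSpace.SeparableSpace H] (hinf : ¬ FiniteDimensional ℂ H) :
    (¬ ∃ Φ : KH H →L[ℂ] ℂ, ∀ ξ : H, Φ (KH.rankOne ξ ξ) = (‖ξ‖ : ℂ) ^ 2) ∧
    (¬ ∃ Φ : KH H →L[ℂ] ℂ, ∀ p : H × H,
        (‖p.1‖ : ℂ) ^ 2 + (‖p.2‖ : ℂ) ^ 2
          = Φ (KH.rankOne p.1 p.1 + KH.rankOne p.2 p.2)) :=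
  no_continuous_linear_representation_on_compacts_general hinf
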